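/- arXiv:1305.1030 — 3 statements merged into one kernel-verified Lean document; each statement's English description precedes it below -/
import Mathlib

section
/- Let $0<r<1<R$, let $\zeta$ be holomorphic and nonvanishing on the annulus $A=\{r<|z|<R\}$, and let $L$ be holomorphic on $A$ with $e^{L(z)}=\zeta(z)/z$ for all $z\in A$. Then: (a) for every nonzero integer $i$, $\frac{1}{2\pi i}\oint_{|z|=1}\frac{\zeta(z)^{-i}}{i}\,\frac{dz}{z} \;=\; -\frac{1}{2\pi i}\oint_{|z|=1}\zeta(z)^{-i-1}\,\zeta'(z)\,L(z)\,dz$; and (b) $\frac{1}{2\pi i}\oint_{|z|=1}L(z)\,\frac{dz}{z} \;=\; \frac{1}{2\pi i}\oint_{|z|=1}\zeta(z)^{-1}\,\zeta'(z)\,L(z)\,dz$. (Circle integrals counterclockwise.) -/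
/-!
Differentiating `exp L = ζ / z` gives `L' = ζ' / ζ - 1 / z`. Hence
`ζ ^ (-i) / (i z) + ζ ^ (-i - 1) ζ' L` is the derivative of `-ζ ^ (-i) (L + 1 / i) / i`, and
`ζ' L / ζ - L / z = L L'` is the derivative of `L ^ 2 / 2`. Both identities follow because the
integral of a derivative around a circle vanishes.
-/

open Complex Metric Filter Topology

theorem circleIntegral.integral_neg (f : ℂ → ℂ) (c : ℂ) (R : ℝ) :
    ∮ z in C(c, R), -f z = -∮ z in C(c, R), f z := by
  simp [circleIntegral, intervalIntegral.integral_neg]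

theorem circleIntegral.integral_eq_neg_of_hasDerivAt_add {f g F : ℂ → ℂ} {c : ℂ} {R : ℝ}
    (hf : ContinuousOn f (sphere c |R|)) (hg : ContinuousOn g (sphere c |R|))
    (hF : ∀ z ∈ sphere c |R|, HasDerivAt F (f z + g z) z) :
    ∮ z in C(c, R), f z = -∮ z in C(c, R), g z := by
  have hsum : ∮ z in C(c, R), (f z + g z) = 0 :=
    circleIntegral.integral_eq_zero_of_hasDerivWithinAt' fun z hz => (hF z hz).hasDerivWithinAt
  rw [circleIntegral.integral_add hf.circleIntegrable' hg.circleIntegrable'] at hsum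
  exact eq_neg_of_add_eq_zero_left hsum

theorem hasDerivAt_of_cexp_eventuallyEq {L g : ℂ → ℂ} {g' z : ℂ} (hL : DifferentiableAt ℂ L z)
    (hg : HasDerivAt g g' z) (h : (fun w => cexp (L w)) =ᶠ[𝓝 z] g) :
    HasDerivAt L (g' / g z) z := by
  have hg' : g' = cexp (L z) * deriv L z :=
    hg.unique (hL.hasDerivAt.cexp.congr_of_eventuallyEq h.symm)
  rw [hg', ← h.eq_of_nhds, mul_div_cancel_left₀ _ (exp_ne_zero _)]
  exact hL.hasDerivAt

section LogBranch

variable {U : Set ℂ} {ζ L : ℂ → ℂ}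

theorem ne_zero_of_cexp_eq_div {z : ℂ} (h : cexp (L z) = ζ z / z) : ζ z ≠ 0 ∧ z ≠ 0 :=
  div_ne_zero_iff.mp (h ▸ exp_ne_zero _)

theorem hasDerivAt_of_cexp_eq_div (hU : IsOpen U) (hζ : DifferentiableOn ℂ ζ U)
    (hL : DifferentiableOn ℂ L U) (hexp : ∀ z ∈ U, cexp (L z) = ζ z / z) {z : ℂ} (hz : z ∈ U) :
    HasDerivAt L (deriv ζ z / ζ z - z⁻¹) z := by
  obtain ⟨hζz, hz0⟩ := ne_zero_of_cexp_eq_div (hexp z hz)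
  have hquot := ((hζ.differentiableAt (hU.mem_nhds hz)).hasDerivAt).div (hasDerivAt_id z) hz0
  have hL' := hasDerivAt_of_cexp_eventuallyEq (hL.differentiableAt (hU.mem_nhds hz)) hquot
    (eventually_of_mem (hU.mem_nhds hz) hexp)
  refine hL'.congr_deriv ?_
  simp only [Pi.div_apply, id]
  field_simp

theorem circleIntegral_zpow_div_eq (hU : IsOpen U) (hζ : DifferentiableOn ℂ ζ U)
    (hL : DifferentiableOn ℂ L U) (hexp : ∀ z ∈ U, cexp (L z) = ζ z / z)
    {c : ℂ} {R : ℝ} (hsU : sphere c |R| ⊆ U) {i : ℤ} (hi : i ≠ 0) :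
    ∮ z in C(c, R), ζ z ^ (-i) / i / z = -∮ z in C(c, R), ζ z ^ (-i - 1) * deriv ζ z * L z := by
  have hζ0 : ∀ z ∈ sphere c |R|, ζ z ≠ 0 := fun z hz =>
    (ne_zero_of_cexp_eq_div (hexp z (hsU hz))).1
  have hz0 : ∀ z ∈ sphere c |R|, z ≠ 0 := fun z hz =>
    (ne_zero_of_cexp_eq_div (hexp z (hsU hz))).2
  have hζc : ContinuousOn ζ (sphere c |R|) := hζ.continuousOn.mono hsU
  refine circleIntegral.integral_eq_neg_of_hasDerivAt_add
    (F := fun z => -(ζ z ^ (-i) * (L z + (i : ℂ)⁻¹)) / i) ?_ ?_ fun z hz => ?_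
  · exact ((hζc.zpow₀ _ fun z hz => Or.inl (hζ0 z hz)).div_const _).div continuousOn_id hz0
  · exact ((hζc.zpow₀ _ fun z hz => Or.inl (hζ0 z hz)).mul
      ((hζ.deriv hU).continuousOn.mono hsU)).mul (hL.continuousOn.mono hsU)
  · have hζz := (hζ.differentiableAt (hU.mem_nhds (hsU hz))).hasDerivAt
    have hpow : HasDerivAt (fun w => ζ w ^ (-i)) ((-i : ℤ) * ζ z ^ (-i - 1) * deriv ζ z) z :=
      (hasDerivAt_zpow (-i) (ζ z) (Or.inl (hζ0 z hz))).comp z hζz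
    refine ((hpow.mul ((hasDerivAt_of_cexp_eq_div hU hζ hL hexp (hsU hz)).add_const
      (i : ℂ)⁻¹)).neg.div_const (i : ℂ)).congr_deriv ?_
    have hiC : (i : ℂ) ≠ 0 := Int.cast_ne_zero.mpr hi
    have hζpow : ζ z ^ (-i) = ζ z ^ (-i - 1) * ζ z := by
      rw [← zpow_add_one₀ (hζ0 z hz), sub_add_cancel]
    rw [hζpow]
    field_simp [hζ0 z hz, hz0 z hz]
    push_cast
    ring

theorem circleIntegral_div_eq (hU : IsOpen U) (hζ : DifferentiableOn ℂ ζ U)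
    (hL : DifferentiableOn ℂ L U) (hexp : ∀ z ∈ U, cexp (L z) = ζ z / z)
    {c : ℂ} {R : ℝ} (hsU : sphere c |R| ⊆ U) :
    ∮ z in C(c, R), L z / z = ∮ z in C(c, R), (ζ z)⁻¹ * deriv ζ z * L z := by
  have hζ0 : ∀ z ∈ sphere c |R|, ζ z ≠ 0 := fun z hz =>
    (ne_zero_of_cexp_eq_div (hexp z (hsU hz))).1
  have hz0 : ∀ z ∈ sphere c |R|, z ≠ 0 := fun z hz =>
    (ne_zero_of_cexp_eq_div (hexp z (hsU hz))).2
  have hLc : ContinuousOn L (sphere c |R|) := hL.continuousOn.mono hsU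
  rw [← neg_neg (∮ z in C(c, R), (ζ z)⁻¹ * deriv ζ z * L z), ← circleIntegral.integral_neg]
  refine circleIntegral.integral_eq_neg_of_hasDerivAt_add (F := fun z => -(L z ^ 2 / 2))
    (hLc.div continuousOn_id hz0) ?_ fun z hz => ?_
  · exact ((((hζ.continuousOn.mono hsU).inv₀ hζ0).mul
      ((hζ.deriv hU).continuousOn.mono hsU)).mul hLc).neg
  · refine (((hasDerivAt_of_cexp_eq_div hU hζ hL hexp (hsU hz)).pow 2).div_const 2).neg
      |>.congr_deriv ?_
    field_simp [hζ0 z hz, hz0 z hz]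
    ring

end LogBranch

theorem stmt_7_general (r R : ℝ) (hr1 : r < 1) (hR : 1 < R)
    (ζ L : ℂ → ℂ)
    (hζ : DifferentiableOn ℂ ζ {z : ℂ | r < ‖z‖ ∧ ‖z‖ < R})
    (hL : DifferentiableOn ℂ L {z : ℂ | r < ‖z‖ ∧ ‖z‖ < R})
    (hexp : ∀ z : ℂ, r < ‖z‖ → ‖z‖ < R →
      Complex.exp (L z) = ζ z / z) :
    (∀ i : ℤ, i ≠ 0 →
      (2 * Real.pi * Complex.I)⁻¹ * (∮ z in C(0, 1), ζ z ^ (-i) / (i : ℂ) / z)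
        = -((2 * Real.pi * Complex.I)⁻¹ *
            ∮ z in C(0, 1), ζ z ^ (-i - 1) * deriv ζ z * L z)) ∧
    (2 * Real.pi * Complex.I)⁻¹ * (∮ z in C(0, 1), L z / z)
      = (2 * Real.pi * Complex.I)⁻¹ *
          ∮ z in C(0, 1), (ζ z)⁻¹ * deriv ζ z * L z := by
  set A := {z : ℂ | r < ‖z‖ ∧ ‖z‖ < R}
  have hA : IsOpen A :=
    (isOpen_lt continuous_const continuous_norm).inter (isOpen_lt continuous_norm continuous_const)
  have hsA : sphere (0 : ℂ) |1| ⊆ A := fun z hz => by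
    rw [abs_one, mem_sphere_zero_iff_norm] at hz
    exact ⟨hz ▸ hr1, hz ▸ hR⟩
  have hexpA : ∀ z ∈ A, cexp (L z) = ζ z / z := fun z hz => hexp z hz.1 hz.2
  refine ⟨fun i hi => ?_, ?_⟩
  · rw [circleIntegral_zpow_div_eq hA hζ hL hexpA hsA hi, mul_neg]
  · rw [circleIntegral_div_eq hA hζ hL hexpA hsA]

/-- Agreement of the two definitions of the flat coordinates `tⁱ` (Proposition 2.4 of
Wu–Zuo), expressed in the variable `z` with a holomorphic branch `L` of `log(ζ(z)/z)`. -/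
theorem stmt_7 (r R : ℝ) (hr : 0 < r) (hr1 : r < 1) (hR : 1 < R)
    (ζ L : ℂ → ℂ)
    (hζ : DifferentiableOn ℂ ζ {z : ℂ | r < ‖z‖ ∧ ‖z‖ < R})
    (hne : ∀ z : ℂ, r < ‖z‖ → ‖z‖ < R → ζ z ≠ 0)
    (hL : DifferentiableOn ℂ L {z : ℂ | r < ‖z‖ ∧ ‖z‖ < R})
    (hexp : ∀ z : ℂ, r < ‖z‖ → ‖z‖ < R →
      Complex.exp (L z) = ζ z / z) :
    (∀ i : ℤ, i ≠ 0 →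
      (2 * Real.pi * Complex.I)⁻¹ * (∮ z in C(0, 1), ζ z ^ (-i) / (i : ℂ) / z)
        = -((2 * Real.pi * Complex.I)⁻¹ *
            ∮ z in C(0, 1), ζ z ^ (-i - 1) * deriv ζ z * L z)) ∧
    (2 * Real.pi * Complex.I)⁻¹ * (∮ z in C(0, 1), L z / z)
      = (2 * Real.pi * Complex.I)⁻¹ *
          ∮ z in C(0, 1), (ζ z)⁻¹ * deriv ζ z * L z :=
  stmt_7_general r R hr1 hR ζ L hζ hL hexp
end

section
/- Let $K$ be a field, let $p,q,r\in K$ be pairwise distinct and nonzero, and let $A,B,C\in K$. On the free $K$-module with basis $e_p,e_q,e_r$ define, for distinct $x,y\in\{p,q,r\}$, $e_x * e_y := \frac{xy}{x-y}\big(A_x\,e_y - A_y\,e_x\big)$, where $A_p=A$, $A_q=B$, $A_r=C$, and extend $*$ bilinearly. Then $(e_p * e_q) * e_r = e_p * (e_q * e_r)$, and $e_x*e_y=e_y*e_x$ for all distinct $x,y$. -/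
/-- Lemma 2.6(i) of Wu–Zuo evaluated on three generating covectors at pairwise
distinct nonzero points: the product
`e_x * e_y = (xy/(x-y))(A_x e_y - A_y e_x)` (extended bilinearly) is associative
and commutative. -/
theorem stmt_9 (K : Type*) [Field K] (P cA : Fin 3 → K)
    (hPne : ∀ x : Fin 3, P x ≠ 0)
    (hPdist : ∀ x y : Fin 3, x ≠ y → P x ≠ P y)
    (B : (Fin 3 → K) →ₗ[K] (Fin 3 → K) →ₗ[K] (Fin 3 → K))
    (e : Fin 3 → (Fin 3 → K)) (he : ∀ x : Fin 3, e x = Pi.single x 1)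
    (hB : ∀ x y : Fin 3, x ≠ y →
      B (e x) (e y) = (P x * P y / (P x - P y)) • (cA x • e y - cA y • e x)) :
    B (B (e 0) (e 1)) (e 2) = B (e 0) (B (e 1) (e 2)) ∧
    ∀ x y : Fin 3, x ≠ y → B (e x) (e y) = B (e y) (e x) := by
  have h01 := hB 0 1 (by decide)
  have h02 := hB 0 2 (by decide)
  have h10 := hB 1 0 (by decide)
  have h12 := hB 1 2 (by decide)
  have h20 := hB 2 0 (by decide)
  have h21 := hB 2 1 (by decide)
  have d01 : P 0 - P 1 ≠ 0 := sub_ne_zero.mpr (hPdist 0 1 (by decide))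
  have d02 : P 0 - P 2 ≠ 0 := sub_ne_zero.mpr (hPdist 0 2 (by decide))
  have d12 : P 1 - P 2 ≠ 0 := sub_ne_zero.mpr (hPdist 1 2 (by decide))
  have d10 : P 1 - P 0 ≠ 0 := sub_ne_zero.mpr (hPdist 1 0 (by decide))
  have d20 : P 2 - P 0 ≠ 0 := sub_ne_zero.mpr (hPdist 2 0 (by decide))
  have d21 : P 2 - P 1 ≠ 0 := sub_ne_zero.mpr (hPdist 2 1 (by decide))
  constructor
  · rw [h01, h12]
    simp only [map_smul, map_sub, LinearMap.smul_apply, LinearMap.sub_apply,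
      h01, h02, h12]
    simp only [he, smul_sub, smul_smul]
    funext i
    fin_cases i <;>
      simp [Pi.single_apply] <;> field_simp <;> ring
  · intro x y hxy
    rw [hB x y hxy, hB y x (Ne.symm hxy)]
    have dxy : P x - P y ≠ 0 := sub_ne_zero.mpr (hPdist x y hxy)
    have dyx : P y - P x ≠ 0 := sub_ne_zero.mpr (hPdist y x (Ne.symm hxy))
    have : P y * P x / (P y - P x) = -(P x * P y / (P x - P y)) := by
      field_simp; ring
    rw [this, neg_smul, ← smul_neg, neg_sub]
end

section
/- Let $K$ be a field, let $p,q,r\in K$ be pairwise distinct, and let $A,B,C\in K$. Then $\frac{pq}{p-q}\Big(A\cdot\frac{qr}{q-r}\,(B-C)\;-\;B\cdot\frac{pr}{p-r}\,(A-C)\Big) \;=\; \frac{qr}{q-r}\Big(B\cdot\frac{rp}{r-p}\,(C-A)\;-\;C\cdot\frac{qp}{q-p}\,(B-A)\Big)$. -/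
/-- Lemma 2.6(ii) of Wu–Zuo (invariance of the bilinear form with respect to the
multiplication), evaluated at pairwise distinct points: a field identity. -/
theorem stmt_11 (K : Type*) [Field K] (p q r A B C : K)
    (hpq : p ≠ q) (hpr : p ≠ r) (hqr : q ≠ r)
    (hp : p ≠ 0) (hq : q ≠ 0) (hr : r ≠ 0) :
    p * q / (p - q) *
        (A * (q * r / (q - r)) * (B - C) - B * (p * r / (p - r)) * (A - C))
      = q * r / (q - r) *
          (B * (r * p / (r - p)) * (C - A) - C * (q * p / (q - p)) * (B - A)) := by
  have h1 : p - q ≠ 0 := sub_ne_zero.mpr hpq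
  have h2 : p - r ≠ 0 := sub_ne_zero.mpr hpr
  have h3 : q - r ≠ 0 := sub_ne_zero.mpr hqr
  have h4 : r - p ≠ 0 := sub_ne_zero.mpr hpr.symm
  have h5 : q - p ≠ 0 := sub_ne_zero.mpr hpq.symm
  field_simp
  ring
end
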